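/- arXiv:0910.0763 — 2 statements merged into one kernel-verified Lean document; each statement's English description precedes it below -/
import Mathlib

section
/- Let a, b, c, d be four independent centered Gaussian random variables, each with variance λ₂ > 0. Then E|ad − bc| = λ₂. Equivalently, the expected area of the parallelogram generated by two independent standard Gaussian vectors in ℝ² equals 1. Moreover, the distribution of |ad − bc|/λ₂ is that of the product of the square roots of two independent random variables with χ²(2) and χ²(1) distributions respectively. -/
open MeasureTheory ProbabilityTheory Real
open scoped ENNReal NNReal

/-- The chi-square distribution with `n` degrees of freedom, as the Gamma
distribution with shape `n/2` and rate `1/2`. -/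
noncomputable def chiSqMeasure (n : ℕ) : Measure ℝ := gammaMeasure ((n : ℝ) / 2) (1 / 2)

/-!
Conditionally on the first row `(a, b)`, the determinant `ad - bc = -b c + a d` is a centred
Gaussian of variance `λ₂ (a² + b²)`, so `ad - bc` has the law of `√(a² + b²) · Z` with `Z` an
independent `N(0, λ₂)` variable. After normalising to unit variance, `a² + b² ∼ χ²(2)` (polar
coordinates) and `Z² ∼ χ²(1)` (the substitution `u = x²`), which gives the law of
`|ad - bc| / λ₂`. The mean then factors as `E √χ²(2) · E √χ²(1) = √2 Γ(3/2) · √2 / Γ(1/2) = 1`,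
from the moments `E X^p = Γ(a + p) / (Γ(a) r^p)` of the Gamma law with shape `a` and rate `r`.
-/

theorem integral_rpow_gammaMeasure {a r p : ℝ} (ha : 0 < a) (hr : 0 < r) (hp : 0 < p) :
    ∫ x, x ^ p ∂gammaMeasure a r = Gamma (a + p) / (Gamma a * r ^ p) := by
  have hvanish : ∀ x ∉ Set.Ioi (0 : ℝ), gammaPDFReal a r x * x ^ p = 0 := by
    intro x (hx : ¬ 0 < x)
    rcases (not_lt.mp hx).lt_or_eq with hneg | rfl
    · simp [gammaPDFReal, not_le.mpr hneg]
    · simp [Real.zero_rpow hp.ne']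
  calc ∫ x, x ^ p ∂gammaMeasure a r
      = ∫ x, gammaPDFReal a r x * x ^ p := by
        rw [gammaMeasure, integral_withDensity_eq_integral_toReal_smul (f := gammaPDF a r)
          (measurable_gammaPDFReal a r).ennreal_ofReal (ae_of_all _ fun _ => ENNReal.ofReal_lt_top)]
        simp [gammaPDF, ENNReal.toReal_ofReal (gammaPDFReal_nonneg ha hr _)]
    _ = ∫ x in Set.Ioi 0, r ^ a / Gamma a * (x ^ (a + p - 1) * exp (-(r * x))) := by
        rw [← setIntegral_eq_integral_of_forall_compl_eq_zero hvanish]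
        refine setIntegral_congr_fun measurableSet_Ioi fun x (hx : 0 < x) => ?_
        rw [gammaPDFReal, if_pos hx.le, show a + p - 1 = (a - 1) + p by ring,
          Real.rpow_add hx]
        ring
    _ = Gamma (a + p) / (Gamma a * r ^ p) := by
        rw [integral_const_mul, integral_rpow_mul_exp_neg_mul_Ioi (by linarith) hr,
          Real.div_rpow zero_le_one hr.le, Real.one_rpow, Real.rpow_add hr]
        field_simp

instance (n : ℕ) : SFinite (chiSqMeasure n) := by
  unfold chiSqMeasure gammaMeasure
  infer_instance

theorem integral_sqrt_chiSqMeasure {n : ℕ} (hn : 0 < n) :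
    ∫ x, √x ∂chiSqMeasure n = √2 * Gamma ((n + 1) / 2) / Gamma (n / 2) := by
  simp_rw [Real.sqrt_eq_rpow]
  rw [chiSqMeasure, integral_rpow_gammaMeasure (by positivity) one_half_pos one_half_pos,
    Real.div_rpow zero_le_one zero_le_two, Real.one_rpow]
  have := Real.Gamma_pos_of_pos (show (0 : ℝ) < n / 2 by positivity)
  field_simp

theorem integral_sqrt_mul_sqrt_chiSqMeasure_two_one :
    ∫ p, √p.1 * √p.2 ∂(chiSqMeasure 2).prod (chiSqMeasure 1) = 1 := by
  rw [integral_prod_mul (fun x => √x) (fun x => √x), integral_sqrt_chiSqMeasure two_pos,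
    integral_sqrt_chiSqMeasure one_pos]
  have hGamma : Gamma (3 / 2) = Gamma (1 / 2) / 2 := by
    rw [show (3 / 2 : ℝ) = 1 / 2 + 1 by norm_num, Real.Gamma_add_one one_half_pos.ne']
    ring
  have := Real.Gamma_pos_of_pos one_half_pos
  norm_num [hGamma]
  field_simp
  norm_num

lemma lintegral_eq_two_mul_setLIntegral_Ioi_of_even {g : ℝ → ℝ≥0∞} (hg : ∀ x, g (-x) = g x) :
    ∫⁻ x, g x = 2 * ∫⁻ x in Set.Ioi 0, g x := by
  have hneg : ∫⁻ x in Set.Iio 0, g x = ∫⁻ x in Set.Ioi 0, g x := by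
    rw [← (Measure.measurePreserving_neg volume).setLIntegral_comp_preimage_emb
      (MeasurableEquiv.neg ℝ).measurableEmbedding]
    simp [hg]
  rw [← lintegral_add_compl g measurableSet_Ioi, Set.compl_Ioi,
    setLIntegral_congr Iio_ae_eq_Iic.symm, hneg, two_mul]

lemma setLIntegral_Ioi_zero_eq_comp_sq (g : ℝ → ℝ≥0∞) :
    ∫⁻ u in Set.Ioi 0, g u = ∫⁻ x in Set.Ioi 0, ENNReal.ofReal (2 * x) * g (x ^ 2) := by
  have himage : (· ^ 2) '' Set.Ioi (0 : ℝ) = Set.Ioi 0 := by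
    ext u
    constructor
    · rintro ⟨x, hx, rfl⟩
      exact pow_pos (Set.mem_Ioi.1 hx) 2
    · exact fun hu => ⟨√u, Real.sqrt_pos.2 hu, Real.sq_sqrt hu.le⟩
  have hderiv : ∀ x ∈ Set.Ioi (0 : ℝ), HasDerivWithinAt (· ^ 2) (2 * x) (Set.Ioi 0) x :=
    fun x _ => by simpa using (hasDerivAt_pow 2 x).hasDerivWithinAt
  have hinj : Set.InjOn (· ^ 2 : ℝ → ℝ) (Set.Ioi 0) :=
    (pow_left_strictMonoOn₀ two_ne_zero).injOn.mono Set.Ioi_subset_Ici_self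
  rw [← himage, lintegral_image_eq_lintegral_abs_deriv_mul measurableSet_Ioi hderiv hinj, himage]
  refine setLIntegral_congr_fun measurableSet_Ioi fun x (hx : 0 < x) => ?_
  rw [abs_of_pos (by positivity)]

lemma lintegral_gammaMeasure_eq_setLIntegral_comp_sq {a r : ℝ} {g : ℝ → ℝ≥0∞} (hg : Measurable g) :
    ∫⁻ u, g u ∂gammaMeasure a r
      = ∫⁻ x in Set.Ioi 0, ENNReal.ofReal (2 * x * gammaPDFReal a r (x ^ 2)) * g (x ^ 2) := by
  have hsupport : Function.support (gammaPDF a r * g) ⊆ Set.Ici 0 := fun u hu =>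
    Set.mem_Ici.2 <| not_lt.1 fun hneg => hu (by simp [gammaPDF_of_neg hneg])
  rw [gammaMeasure, lintegral_withDensity_eq_lintegral_mul _ (f := gammaPDF a r)
      (measurable_gammaPDFReal a r).ennreal_ofReal hg,
    ← setLIntegral_eq_of_support_subset hsupport, setLIntegral_congr Ioi_ae_eq_Ici.symm,
    setLIntegral_Ioi_zero_eq_comp_sq]
  refine setLIntegral_congr_fun measurableSet_Ioi fun x (hx : 0 < x) => ?_
  rw [Pi.mul_apply, ← mul_assoc, gammaPDF, ← ENNReal.ofReal_mul (by positivity)]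

theorem gaussianReal_map_sq : (gaussianReal 0 1).map (· ^ 2) = gammaMeasure (1 / 2) (1 / 2) := by
  have hdensity : ∀ x : ℝ, 0 < x →
      2 * gaussianPDFReal 0 1 x = 2 * x * gammaPDFReal (1 / 2) (1 / 2) (x ^ 2) := by
    intro x hx
    rw [gaussianPDFReal, gammaPDFReal, if_pos (by positivity), Real.Gamma_one_half_eq,
      Real.rpow_sub (by positivity), Real.rpow_one, ← Real.sqrt_eq_rpow, ← Real.sqrt_eq_rpow,
      Real.sqrt_sq hx.le, NNReal.coe_one, mul_one, sub_zero, one_div, Real.sqrt_inv,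
      Real.sqrt_mul zero_le_two]
    field_simp
  refine Measure.ext_of_lintegral _ fun g hg => ?_
  rw [lintegral_map hg (continuous_pow 2).measurable,
    lintegral_gammaMeasure_eq_setLIntegral_comp_sq hg,
    gaussianReal_of_var_ne_zero 0 one_ne_zero,
    lintegral_withDensity_eq_lintegral_mul _ (measurable_gaussianPDF 0 1)
      (show Measurable fun x : ℝ => g (x ^ 2) from hg.comp (continuous_pow 2).measurable),
    lintegral_eq_two_mul_setLIntegral_Ioi_of_even (by simp [gaussianPDF, gaussianPDFReal]),
    ← lintegral_const_mul' _ _ ENNReal.ofNat_ne_top]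
  refine setLIntegral_congr_fun measurableSet_Ioi fun x (hx : 0 < x) => ?_
  rw [Pi.mul_apply, ← mul_assoc, gaussianPDF, ← ENNReal.ofReal_ofNat 2,
    ← ENNReal.ofReal_mul zero_le_two, hdensity x hx]

lemma gaussianPDFReal_zero_one_mul (x y : ℝ) :
    gaussianPDFReal 0 1 x * gaussianPDFReal 0 1 y = (2 * π)⁻¹ * exp (-((x ^ 2 + y ^ 2) / 2)) := by
  simp only [gaussianPDFReal, NNReal.coe_one, mul_one, sub_zero]
  rw [mul_mul_mul_comm, ← Real.exp_add, ← mul_inv, Real.mul_self_sqrt (by positivity)]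
  ring_nf

lemma lintegral_comp_sum_sq_gaussianReal_prod {g : ℝ → ℝ≥0∞} (hg : Measurable g) :
    ∫⁻ p, g (p.1 ^ 2 + p.2 ^ 2) ∂(gaussianReal 0 1).prod (gaussianReal 0 1)
      = ∫⁻ r in Set.Ioi 0, ENNReal.ofReal (r * exp (-(r ^ 2 / 2))) * g (r ^ 2) := by
  rw [gaussianReal_of_var_ne_zero 0 one_ne_zero, prod_withDensity (measurable_gaussianPDF 0 1)
    (measurable_gaussianPDF 0 1), ← Measure.volume_eq_prod,
    lintegral_withDensity_eq_lintegral_mul _ (by fun_prop) (by fun_prop),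
    ← lintegral_comp_polarCoord_symm]
  calc _ = ∫⁻ p in Set.Ioi 0 ×ˢ Set.Ioo (-π) π,
        ENNReal.ofReal (p.1 * exp (-(p.1 ^ 2 / 2))) * g (p.1 ^ 2) * ENNReal.ofReal (2 * π)⁻¹ := by
        rw [polarCoord_target]
        refine setLIntegral_congr_fun (measurableSet_Ioi.prod measurableSet_Ioo) ?_
        rintro ⟨r, θ⟩ ⟨hr : 0 < r, -⟩
        have hsq : (r * cos θ) ^ 2 + (r * sin θ) ^ 2 = r ^ 2 := by
          rw [mul_pow, mul_pow, ← mul_add, cos_sq_add_sin_sq, mul_one]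
        simp only [polarCoord_symm_apply, smul_eq_mul, Pi.mul_apply, hsq, gaussianPDF]
        rw [← ENNReal.ofReal_mul (gaussianPDFReal_nonneg 0 1 _),
          gaussianPDFReal_zero_one_mul, hsq, ← mul_assoc, ← ENNReal.ofReal_mul hr.le,
          mul_right_comm, ← ENNReal.ofReal_mul (by positivity)]
        ring_nf
    _ = _ := by
        rw [Measure.volume_eq_prod, ← Measure.prod_restrict,
          lintegral_prod_mul (f := fun r => ENNReal.ofReal (r * exp (-(r ^ 2 / 2))) * g (r ^ 2))
            (g := fun _ => ENNReal.ofReal (2 * π)⁻¹) (by fun_prop) aemeasurable_const,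
          lintegral_const, Measure.restrict_apply_univ, Real.volume_Ioo,
          ← ENNReal.ofReal_mul (by positivity), show (2 * π)⁻¹ * (π - -π) = 1 by field_simp; ring,
          ENNReal.ofReal_one, mul_one]

theorem gaussianReal_prod_map_sum_sq :
    ((gaussianReal 0 1).prod (gaussianReal 0 1)).map (fun p => p.1 ^ 2 + p.2 ^ 2)
      = gammaMeasure 1 (1 / 2) := by
  refine Measure.ext_of_lintegral _ fun g hg => ?_
  rw [lintegral_map hg (by fun_prop), lintegral_comp_sum_sq_gaussianReal_prod hg,
    lintegral_gammaMeasure_eq_setLIntegral_comp_sq hg]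
  refine setLIntegral_congr_fun measurableSet_Ioi fun x (hx : 0 < x) => ?_
  rw [gammaPDFReal, if_pos (by positivity), Real.Gamma_one, sub_self, Real.rpow_zero, Real.rpow_one]
  ring_nf

theorem gaussianReal_prod_map_mul_add_mul (m₁ m₂ : ℝ) (v₁ v₂ : ℝ≥0) (c d : ℝ) :
    ((gaussianReal m₁ v₁).prod (gaussianReal m₂ v₂)).map (fun p => c * p.1 + d * p.2)
      = gaussianReal (c * m₁ + d * m₂)
          (.mk (c ^ 2) (sq_nonneg c) * v₁ + .mk (d ^ 2) (sq_nonneg d) * v₂) := by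
  have hcomp : (fun p : ℝ × ℝ => c * p.1 + d * p.2)
      = (fun p => p.1 + p.2) ∘ Prod.map (c * ·) (d * ·) := rfl
  rw [hcomp, ← Measure.map_map (by fun_prop) (by fun_prop),
    ← Measure.map_prod_map _ _ (by fun_prop) (by fun_prop), gaussianReal_map_const_mul,
    gaussianReal_map_const_mul, ← Measure.conv, gaussianReal_conv_gaussianReal]

theorem MeasureTheory.Measure.map_prod_eq_map_prod_of_map_eq {α β γ δ : Type*} [MeasurableSpace α]
    [MeasurableSpace β] [MeasurableSpace γ] [MeasurableSpace δ] (μ : Measure α) {ν : Measure β}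
    {ρ : Measure γ} [SFinite ν] [SFinite ρ] {g : α → β → δ} {h : α → γ → δ}
    (hg : Measurable (Function.uncurry g)) (hh : Measurable (Function.uncurry h))
    (hgh : ∀ x, ν.map (g x) = ρ.map (h x)) :
    (μ.prod ν).map (Function.uncurry g) = (μ.prod ρ).map (Function.uncurry h) := by
  ext s hs
  rw [Measure.map_apply hg hs, Measure.map_apply hh hs, Measure.prod_apply (hg hs),
    Measure.prod_apply (hh hs)]
  refine lintegral_congr fun x => ?_
  change ν (g x ⁻¹' s) = ρ (h x ⁻¹' s)
  rw [← Measure.map_apply hg.of_uncurry_left hs, ← Measure.map_apply hh.of_uncurry_left hs, hgh]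

theorem gaussianReal_map_det (v : ℝ≥0) :
    (((gaussianReal 0 v).prod (gaussianReal 0 v)).prod
        ((gaussianReal 0 v).prod (gaussianReal 0 v))).map
        (fun q => q.1.1 * q.2.2 - q.1.2 * q.2.1)
      = (((gaussianReal 0 v).prod (gaussianReal 0 v)).prod (gaussianReal 0 v)).map
        (fun p => √(p.1.1 ^ 2 + p.1.2 ^ 2) * p.2) := by
  refine Measure.map_prod_eq_map_prod_of_map_eq _ (ν := (gaussianReal 0 v).prod (gaussianReal 0 v))
    (ρ := gaussianReal 0 v) (g := fun (x q : ℝ × ℝ) => x.1 * q.2 - x.2 * q.1)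
    (h := fun (x : ℝ × ℝ) (z : ℝ) => √(x.1 ^ 2 + x.2 ^ 2) * z) (by fun_prop) (by fun_prop)
    fun x => ?_
  have hlin : (fun q : ℝ × ℝ => x.1 * q.2 - x.2 * q.1) = fun q => -x.2 * q.1 + x.1 * q.2 := by
    ext q
    ring
  rw [hlin, gaussianReal_prod_map_mul_add_mul, gaussianReal_map_const_mul]
  congr 1
  · ring
  · ext
    simp [Real.sq_sqrt (by positivity : 0 ≤ x.1 ^ 2 + x.2 ^ 2)]
    ring

theorem gaussianReal_map_abs_det :
    (((gaussianReal 0 1).prod (gaussianReal 0 1)).prod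
        ((gaussianReal 0 1).prod (gaussianReal 0 1))).map
        (fun q => |q.1.1 * q.2.2 - q.1.2 * q.2.1|)
      = ((chiSqMeasure 2).prod (chiSqMeasure 1)).map (fun p => √p.1 * √p.2) := by
  have hchi2 : chiSqMeasure 2 = gammaMeasure 1 (1 / 2) := by norm_num [chiSqMeasure]
  have hchi1 : chiSqMeasure 1 = gammaMeasure (1 / 2) (1 / 2) := by norm_num [chiSqMeasure]
  have habs : (fun q : (ℝ × ℝ) × (ℝ × ℝ) => |q.1.1 * q.2.2 - q.1.2 * q.2.1|)
      = abs ∘ fun q => q.1.1 * q.2.2 - q.1.2 * q.2.1 := rfl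
  rw [habs, ← Measure.map_map measurable_abs (by fun_prop), gaussianReal_map_det,
    Measure.map_map measurable_abs (by fun_prop), hchi2, hchi1, ← gaussianReal_prod_map_sum_sq,
    ← gaussianReal_map_sq, Measure.map_prod_map _ _ (by fun_prop) (by fun_prop),
    Measure.map_map (by fun_prop) (by fun_prop)]
  congr 1
  ext p
  simp [abs_mul, Real.sqrt_sq_eq_abs]

theorem ProbabilityTheory.iIndepFun.map_fin_four_eq_prod {Ω β : Type*} [MeasurableSpace Ω]
    [MeasurableSpace β] {P : Measure Ω} [IsFiniteMeasure P] {X : Fin 4 → Ω → β}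
    (hX : iIndepFun X P) (hmeas : ∀ i, AEMeasurable (X i) P) :
    P.map (fun ω => ((X 0 ω, X 1 ω), (X 2 ω, X 3 ω)))
      = ((P.map (X 0)).prod (P.map (X 1))).prod ((P.map (X 2)).prod (P.map (X 3))) := by
  rw [(indepFun_iff_map_prod_eq_prod_map_map ((hmeas 0).prodMk (hmeas 1))
      ((hmeas 2).prodMk (hmeas 3))).1 (hX.indepFun_prodMk_prodMk₀ hmeas 0 1 2 3
        (by decide) (by decide) (by decide) (by decide)),
    (indepFun_iff_map_prod_eq_prod_map_map (hmeas 0) (hmeas 1)).1 (hX.indepFun (by decide)),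
    (indepFun_iff_map_prod_eq_prod_map_map (hmeas 2) (hmeas 3)).1 (hX.indepFun (by decide))]

theorem map_abs_det_of_iIndepFun {Ω : Type*} [MeasurableSpace Ω] {P : Measure Ω}
    [IsFiniteMeasure P] {X : Fin 4 → Ω → ℝ} (hX : iIndepFun X P)
    (hlaw : ∀ i, P.map (X i) = gaussianReal 0 1) :
    P.map (fun ω => |X 0 ω * X 3 ω - X 1 ω * X 2 ω|)
      = ((chiSqMeasure 2).prod (chiSqMeasure 1)).map (fun p => √p.1 * √p.2) := by
  have hmeas : ∀ i, AEMeasurable (X i) P := fun i =>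
    AEMeasurable.of_map_ne_zero (by rw [hlaw i]; exact IsProbabilityMeasure.ne_zero _)
  have hcomp : (fun ω => |X 0 ω * X 3 ω - X 1 ω * X 2 ω|)
      = (fun q : (ℝ × ℝ) × (ℝ × ℝ) => |q.1.1 * q.2.2 - q.1.2 * q.2.1|)
        ∘ fun ω => ((X 0 ω, X 1 ω), (X 2 ω, X 3 ω)) := rfl
  rw [hcomp, ← AEMeasurable.map_map_of_aemeasurable (by fun_prop)
      (((hmeas 0).prodMk (hmeas 1)).prodMk ((hmeas 2).prodMk (hmeas 3))),
    hX.map_fin_four_eq_prod hmeas, hlaw, hlaw, hlaw, hlaw, gaussianReal_map_abs_det]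

theorem map_div_sqrt_eq_gaussianReal_zero_one {Ω : Type*} [MeasurableSpace Ω] {P : Measure Ω}
    {X : Ω → ℝ} {v : ℝ} (hv : 0 < v) (hX_meas : AEMeasurable X P)
    (hX : P.map X = gaussianReal 0 v.toNNReal) :
    P.map (fun ω => X ω / √v) = gaussianReal 0 1 := by
  change P.map ((· / √v) ∘ X) = _
  rw [← AEMeasurable.map_map_of_aemeasurable (by fun_prop) hX_meas, hX,
    gaussianReal_map_div_const, zero_div]
  congr 1
  ext
  simp [Real.sq_sqrt hv.le, hv.le, hv.ne']

/-- If `a, b, c, d` are four independent centered Gaussian variables with common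
variance `λ₂ > 0`, then `E|ad - bc| = λ₂`, and `|ad - bc|/λ₂` is distributed as the
product of the square roots of two independent `χ²(2)` and `χ²(1)` variables. -/
theorem expected_abs_det_gaussian_two_by_two
    {Ω : Type*} [MeasureSpace Ω] [IsProbabilityMeasure (ℙ : Measure Ω)]
    (f : Fin 4 → Ω → ℝ) (lam2 : ℝ) (hlam2 : 0 < lam2)
    (hindep : iIndepFun f ℙ)
    (hgauss : ∀ i, Measure.map (f i) ℙ = gaussianReal 0 lam2.toNNReal) :
    (∫ ω, |f 0 ω * f 3 ω - f 1 ω * f 2 ω| ∂ℙ = lam2) ∧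
    Measure.map (fun ω => |f 0 ω * f 3 ω - f 1 ω * f 2 ω| / lam2) ℙ
      = Measure.map (fun p : ℝ × ℝ => Real.sqrt p.1 * Real.sqrt p.2)
          ((chiSqMeasure 2).prod (chiSqMeasure 1)) := by
  have hmeas : ∀ i, AEMeasurable (f i) ℙ := fun i =>
    AEMeasurable.of_map_ne_zero (by rw [hgauss i]; exact IsProbabilityMeasure.ne_zero _)
  have hstd_law : ∀ i, Measure.map (fun ω => f i ω / √lam2) ℙ = gaussianReal 0 1 := fun i =>
    map_div_sqrt_eq_gaussianReal_zero_one hlam2 (hmeas i) (hgauss i)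
  have hdet : (fun ω => |f 0 ω * f 3 ω - f 1 ω * f 2 ω| / lam2)
      = fun ω => |f 0 ω / √lam2 * (f 3 ω / √lam2) - f 1 ω / √lam2 * (f 2 ω / √lam2)| := by
    ext ω
    rw [div_mul_div_comm, div_mul_div_comm, ← sub_div, Real.mul_self_sqrt hlam2.le, abs_div,
      abs_of_pos hlam2]
  have hlaw := hdet ▸ map_abs_det_of_iIndepFun
    (hindep.comp (fun _ x => x / √lam2) fun _ => measurable_div_const _) hstd_law
  refine ⟨?_, hlaw⟩
  calc ∫ ω, |f 0 ω * f 3 ω - f 1 ω * f 2 ω| ∂ℙ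
      = lam2 * ∫ x, x ∂Measure.map (fun ω => |f 0 ω * f 3 ω - f 1 ω * f 2 ω| / lam2) ℙ := by
        rw [integral_map (f := fun x : ℝ => x) (by fun_prop) (by fun_prop), ← integral_const_mul]
        congr 1 with ω
        field_simp
    _ = lam2 := by
        rw [hlaw, integral_map (f := fun x : ℝ => x) (by fun_prop) (by fun_prop),
          integral_sqrt_mul_sqrt_chiSqMeasure_two_one, mul_one]
end

section
/- Let S, P, γ be real numbers with P > 0, and suppose the quadratic polynomial X² − SX + P has no root in [0, ∞). Then ∫_{−∞}^{∞} (t² − γ)/(t⁴ − St² + P) dt = π·(√P − γ)/√(P·(−S + 2√P)). -/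
/-!
Put `a = √P` and `c = √(2a - S)`; the hypothesis on the roots is what makes `c` real and positive,
and then `t⁴ - S t² + P = (t² - a)² + c² t²`. The integrand is even, and on `(0, ∞)` we write
`t² - γ` as a combination of `t² + a` and `t² - a`. The substitution `u = t - a / t`, a bijection
of `(0, ∞)` onto `ℝ`, turns `(t² + a) / ((t² - a)² + c² t²) dt` into `du / (u² + c²)`, whose
integral is `π / c`, while the involution `t ↦ a / t` changes the sign of
`(t² - a) / ((t² - a)² + c² t²) dt`, so that part integrates to zero.
-/

open MeasureTheory Real Set

section Substitution

variable {E : Type*} [NormedAddCommGroup E] [NormedSpace ℝ E] {a : ℝ}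

lemma hasDerivAt_const_div {t : ℝ} (ht : t ≠ 0) :
    HasDerivAt (fun t => a / t) (-(a / t ^ 2)) t := by
  simpa [div_eq_mul_inv] using (hasDerivAt_inv ht).const_mul a

lemma hasDerivAt_sub_const_div {t : ℝ} (ht : t ≠ 0) :
    HasDerivAt (fun t => t - a / t) (1 + a / t ^ 2) t :=
  ((hasDerivAt_id' t).sub (hasDerivAt_const_div ht)).congr_deriv (sub_neg_eq_add _ _)

lemma strictAntiOn_const_div (ha : 0 < a) : StrictAntiOn (fun t => a / t) (Ioi 0) :=
  fun _ ht _ _ hts => div_lt_div_of_pos_left ha ht hts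

lemma strictMonoOn_sub_const_div (ha : 0 < a) : StrictMonoOn (fun t => t - a / t) (Ioi 0) :=
  fun _ ht _ hs hts => sub_lt_sub hts (strictAntiOn_const_div ha ht hs hts)

lemma image_const_div_Ioi (ha : 0 < a) : (fun t => a / t) '' Ioi 0 = Ioi 0 :=
  Subset.antisymm (image_subset_iff.2 fun _ ht => div_pos ha ht) fun s hs =>
    ⟨a / s, div_pos ha hs, div_div_cancel₀ ha.ne'⟩

-- `t - a / t = u` is the quadratic equation `t ^ 2 - u t - a = 0`; take its positive root.
lemma image_sub_const_div_Ioi (ha : 0 < a) : (fun t => t - a / t) '' Ioi 0 = univ := by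
  refine eq_univ_of_forall fun u => ?_
  set r := √(u ^ 2 + 4 * a)
  have hr : r ^ 2 = u ^ 2 + 4 * a := sq_sqrt (by positivity)
  have hur : |u| < r := by
    rw [← sqrt_sq_eq_abs]
    exact sqrt_lt_sqrt (sq_nonneg u) (by linarith)
  have hpos : 0 < u + r := by linarith [neg_abs_le u]
  refine ⟨(u + r) / 2, half_pos hpos, ?_⟩
  field_simp
  linear_combination hr

lemma integral_Ioi_comp_const_div (ha : 0 < a) (g : ℝ → E) :
    ∫ t in Ioi 0, (a / t ^ 2) • g (a / t) = ∫ t in Ioi 0, g t := by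
  have := integral_image_eq_integral_abs_deriv_smul measurableSet_Ioi
    (fun t ht => (hasDerivAt_const_div (ne_of_gt ht)).hasDerivWithinAt)
    (strictAntiOn_const_div ha).injOn g
  rw [image_const_div_Ioi ha] at this
  rw [this]
  refine setIntegral_congr_fun measurableSet_Ioi fun t ht => ?_
  have : 0 < a / t ^ 2 := div_pos ha (pow_pos ht 2)
  rw [abs_neg, abs_of_pos this]

lemma integral_Ioi_comp_sub_const_div (ha : 0 < a) (g : ℝ → E) :
    ∫ t in Ioi 0, (1 + a / t ^ 2) • g (t - a / t) = ∫ u, g u := by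
  have := integral_image_eq_integral_abs_deriv_smul measurableSet_Ioi
    (fun t ht => (hasDerivAt_sub_const_div (ne_of_gt ht)).hasDerivWithinAt)
    (strictMonoOn_sub_const_div ha).injOn g
  rw [image_sub_const_div_Ioi ha, setIntegral_univ] at this
  rw [this]
  refine setIntegral_congr_fun measurableSet_Ioi fun t ht => ?_
  have : 0 < 1 + a / t ^ 2 := by positivity
  rw [abs_of_pos this]

lemma integrableOn_Ioi_comp_sub_const_div_iff (ha : 0 < a) (g : ℝ → E) :
    IntegrableOn (fun t => (1 + a / t ^ 2) • g (t - a / t)) (Ioi 0) ↔ Integrable g := by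
  have := integrableOn_image_iff_integrableOn_abs_deriv_smul measurableSet_Ioi
    (fun t ht => (hasDerivAt_sub_const_div (ne_of_gt ht)).hasDerivWithinAt)
    (strictMonoOn_sub_const_div ha).injOn g
  rw [image_sub_const_div_Ioi ha, integrableOn_univ] at this
  rw [this]
  refine integrableOn_congr_fun (fun t ht => ?_) measurableSet_Ioi
  have : 0 < 1 + a / t ^ 2 := by positivity
  rw [abs_of_pos this]

end Substitution

section Quartic

variable {a c : ℝ}

lemma sq_add_div_quartic_eq (hc : c ≠ 0) {t : ℝ} (ht : t ≠ 0) :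
    (t ^ 2 + a) / ((t ^ 2 - a) ^ 2 + c ^ 2 * t ^ 2)
      = (c ^ 2)⁻¹ * ((1 + a / t ^ 2) • (1 + ((t - a / t) / c) ^ 2)⁻¹) := by
  have : 0 < (t ^ 2 - a) ^ 2 + c ^ 2 * t ^ 2 := by positivity
  rw [smul_eq_mul]
  field_simp
  ring

lemma integrableOn_Ioi_sq_add_div_quartic (ha : 0 < a) (hc : c ≠ 0) :
    IntegrableOn (fun t => (t ^ 2 + a) / ((t ^ 2 - a) ^ 2 + c ^ 2 * t ^ 2)) (Ioi 0) := by
  have := ((integrableOn_Ioi_comp_sub_const_div_iff ha _).2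
    (integrable_inv_one_add_sq.comp_div hc)).const_mul (c ^ 2)⁻¹
  exact IntegrableOn.congr_fun this
    (fun t ht => (sq_add_div_quartic_eq hc (ne_of_gt ht)).symm) measurableSet_Ioi

lemma integral_Ioi_sq_add_div_quartic (ha : 0 < a) (hc : 0 < c) :
    ∫ t in Ioi 0, (t ^ 2 + a) / ((t ^ 2 - a) ^ 2 + c ^ 2 * t ^ 2) = π / c := by
  have hscale : ∫ u, (1 + (u / c) ^ 2)⁻¹ = c * π := by
    rw [Measure.integral_comp_div (fun u => (1 + u ^ 2)⁻¹), integral_univ_inv_one_add_sq,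
      abs_of_pos hc, smul_eq_mul]
  calc ∫ t in Ioi 0, (t ^ 2 + a) / ((t ^ 2 - a) ^ 2 + c ^ 2 * t ^ 2)
      = ∫ t in Ioi 0, (c ^ 2)⁻¹ * ((1 + a / t ^ 2) • (1 + ((t - a / t) / c) ^ 2)⁻¹) :=
        setIntegral_congr_fun measurableSet_Ioi fun t ht =>
          sq_add_div_quartic_eq hc.ne' (ne_of_gt ht)
    _ = π / c := by
        rw [integral_const_mul,
          (integral_Ioi_comp_sub_const_div ha fun u => (1 + (u / c) ^ 2)⁻¹).trans hscale]
        field_simp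

lemma integral_Ioi_sq_sub_div_quartic (ha : 0 < a) (hc : c ≠ 0) :
    ∫ t in Ioi 0, (t ^ 2 - a) / ((t ^ 2 - a) ^ 2 + c ^ 2 * t ^ 2) = 0 := by
  set g := fun t : ℝ => (t ^ 2 - a) / ((t ^ 2 - a) ^ 2 + c ^ 2 * t ^ 2)
  have hinv : ∀ t ∈ Ioi (0 : ℝ), (a / t ^ 2) • g (a / t) = -g t := by
    intro t ht
    have ht : t ≠ 0 := ne_of_gt ht
    have : 0 < (t ^ 2 - a) ^ 2 + c ^ 2 * t ^ 2 := by positivity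
    simp only [g, smul_eq_mul]
    field_simp
    ring
  have := integral_Ioi_comp_const_div ha g
  rw [setIntegral_congr_fun measurableSet_Ioi hinv, integral_neg] at this
  linarith

lemma integrableOn_Ioi_sq_sub_div_quartic (ha : 0 < a) (hc : c ≠ 0) :
    IntegrableOn (fun t => (t ^ 2 - a) / ((t ^ 2 - a) ^ 2 + c ^ 2 * t ^ 2)) (Ioi 0) := by
  refine (integrableOn_Ioi_sq_add_div_quartic ha hc).mono'
    (by fun_prop : Measurable _).aestronglyMeasurable (ae_of_all _ fun t => ?_)
  rw [norm_div, norm_of_nonneg (by positivity : 0 ≤ (t ^ 2 - a) ^ 2 + c ^ 2 * t ^ 2)]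
  gcongr
  rw [Real.norm_eq_abs, abs_le]
  constructor <;> nlinarith [sq_nonneg t]

theorem integral_sq_sub_div_quartic (ha : 0 < a) (hc : 0 < c) (γ : ℝ) :
    ∫ t, (t ^ 2 - γ) / ((t ^ 2 - a) ^ 2 + c ^ 2 * t ^ 2) = π * (a - γ) / (a * c) := by
  have hsplit : ∀ t, (t ^ 2 - γ) / ((t ^ 2 - a) ^ 2 + c ^ 2 * t ^ 2)
      = (a - γ) / (2 * a) * ((t ^ 2 + a) / ((t ^ 2 - a) ^ 2 + c ^ 2 * t ^ 2))
        + (a + γ) / (2 * a) * ((t ^ 2 - a) / ((t ^ 2 - a) ^ 2 + c ^ 2 * t ^ 2)) := by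
    intro t
    rw [← mul_div_assoc, ← mul_div_assoc, ← add_div]
    congr 1
    field_simp
    ring
  have heven := integral_comp_abs
    (f := fun t => (t ^ 2 - γ) / ((t ^ 2 - a) ^ 2 + c ^ 2 * t ^ 2))
  simp only [sq_abs] at heven
  rw [heven, funext hsplit, integral_add, integral_const_mul, integral_const_mul,
    integral_Ioi_sq_add_div_quartic ha hc, integral_Ioi_sq_sub_div_quartic ha hc.ne', mul_zero,
    add_zero]
  · field_simp
  · exact (integrableOn_Ioi_sq_add_div_quartic ha hc.ne').const_mul _
  · exact (integrableOn_Ioi_sq_sub_div_quartic ha hc.ne').const_mul _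

end Quartic

lemma lt_two_mul_sqrt_of_forall_nonneg_ne_zero {S P : ℝ}
    (hroot : ∀ x : ℝ, 0 ≤ x → x ^ 2 - S * x + P ≠ 0) : S < 2 * √P := by
  by_contra! hS
  have hS0 : 0 ≤ S := le_trans (by positivity) hS
  have hdisc : P ≤ (S / 2) ^ 2 := (sqrt_le_left (by linarith)).1 (by linarith)
  have hd : √((S / 2) ^ 2 - P) ^ 2 = (S / 2) ^ 2 - P := sq_sqrt (sub_nonneg.2 hdisc)
  exact hroot (S / 2 + √((S / 2) ^ 2 - P)) (by positivity) (by linear_combination hd)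

/-- If `P > 0` and `X² - SX + P` has no root in `[0, ∞)`, then
`∫_{-∞}^{∞} (t² - γ)/(t⁴ - St² + P) dt = π(√P - γ)/√(P(-S + 2√P))`. -/
theorem integral_rational_quartic
    (S P γ : ℝ) (hP : 0 < P)
    (hroot : ∀ x : ℝ, 0 ≤ x → x ^ 2 - S * x + P ≠ 0) :
    ∫ t : ℝ, (t ^ 2 - γ) / (t ^ 4 - S * t ^ 2 + P)
      = Real.pi * (Real.sqrt P - γ) / Real.sqrt (P * (-S + 2 * Real.sqrt P)) := by
  have hS := lt_two_mul_sqrt_of_forall_nonneg_ne_zero hroot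
  set a := √P
  set c := √(2 * a - S)
  have ha : 0 < a := sqrt_pos.2 hP
  have hc : 0 < c := sqrt_pos.2 (by linarith)
  have hden : ∀ t : ℝ, t ^ 4 - S * t ^ 2 + P = (t ^ 2 - a) ^ 2 + c ^ 2 * t ^ 2 := by
    intro t
    rw [sq_sqrt (by linarith : 0 ≤ 2 * a - S)]
    linear_combination -sq_sqrt hP.le
  have hrhs : √(P * (-S + 2 * a)) = a * c := by
    rw [sqrt_mul hP.le, neg_add_eq_sub]
  simp only [hden]
  rw [integral_sq_sub_div_quartic ha hc, hrhs]
end
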